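/- Let (H,R) be quasi-triangular, A braided commutative over (H,R), and F a normalized cocycle twist on H. Then under the algebra isomorphism φ(a⋊L) = (F̄₁▷a)⋊F̄₂L, the target maps correspond: φ(t^F(a)) = t_F̃(a), where t^F(a) = (R^F₂▷a)⋊R^F₁ is the target of the smash product bialgebroid A_F⋊H^F and t_F̃(a) = (R₂F̄₂'▷a)⋊R₁F̄₁' is the twisted target of the Xu-twisted bialgebroid (A⋊H)^F̃. -/

import Mathlib

/-!
Writing `t(G)(a) = Σ (G₂ ▷ a) ⊗ G₁` for `G ∈ H ⊗ H`, the formula for `φ` and the multiplicativity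
of the action give `φ (t(G)(a)) = t(F̄₂₁ G)(a)`. For `G = R^F = F₂₁ R F⁻¹` the factor `F̄₂₁ F₂₁`
cancels, leaving `t(R F⁻¹)(a)`.
-/

open TensorProduct

/-- Embedding of `H ⊗ H` into the first and second factors of `H ⊗ H ⊗ H`. -/
noncomputable def leg12 (K H : Type) [CommRing K] [Ring H] [Algebra K H] :
    H ⊗[K] H →ₐ[K] H ⊗[K] (H ⊗[K] H) :=
  Algebra.TensorProduct.map (AlgHom.id K H) Algebra.TensorProduct.includeLeft

/-- Embedding of `H ⊗ H` into the second and third factors of `H ⊗ H ⊗ H`. -/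
noncomputable def leg23 (K H : Type) [CommRing K] [Ring H] [Algebra K H] :
    H ⊗[K] H →ₐ[K] H ⊗[K] (H ⊗[K] H) :=
  Algebra.TensorProduct.includeRight

/-- Embedding of `H ⊗ H` into the first and third factors of `H ⊗ H ⊗ H`. -/
noncomputable def leg13 (K H : Type) [CommRing K] [Ring H] [Algebra K H] :
    H ⊗[K] H →ₐ[K] H ⊗[K] (H ⊗[K] H) :=
  Algebra.TensorProduct.map (AlgHom.id K H) Algebra.TensorProduct.includeRight

/-- `Δ ⊗ id` as a map `H ⊗ H → H ⊗ (H ⊗ H)`. -/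
noncomputable def copL (K H : Type) [CommRing K] [Ring H] [Bialgebra K H] :
    H ⊗[K] H →ₗ[K] H ⊗[K] (H ⊗[K] H) :=
  (TensorProduct.assoc K H H H).toLinearMap ∘ₗ
    TensorProduct.map Coalgebra.comul LinearMap.id

/-- `id ⊗ Δ` as a map `H ⊗ H → H ⊗ (H ⊗ H)`. -/
noncomputable def copR (K H : Type) [CommRing K] [Ring H] [Bialgebra K H] :
    H ⊗[K] H →ₗ[K] H ⊗[K] (H ⊗[K] H) :=
  TensorProduct.map LinearMap.id Coalgebra.comul

/-- `ε ⊗ id : H ⊗ H → H`. -/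
noncomputable def ctL (K H : Type) [CommRing K] [Ring H] [Bialgebra K H] :
    H ⊗[K] H →ₗ[K] H :=
  (TensorProduct.lid K H).toLinearMap ∘ₗ TensorProduct.map Coalgebra.counit LinearMap.id

/-- `id ⊗ ε : H ⊗ H → H`. -/
noncomputable def ctR (K H : Type) [CommRing K] [Ring H] [Bialgebra K H] :
    H ⊗[K] H →ₗ[K] H :=
  (TensorProduct.rid K H).toLinearMap ∘ₗ TensorProduct.map LinearMap.id Coalgebra.counit
/-- The twisted star product `a ⋆_F b = (F̄₁ ▷ a) · (F̄₂ ▷ b)` determined by the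
action `act` and the inverse twist `Finv`. -/
noncomputable def starF {K H A : Type} [CommRing K] [Ring H] [Bialgebra K H]
    [Ring A] [Algebra K A]
    (act : H →ₗ[K] A →ₗ[K] A) (Finv : H ⊗[K] H) (a b : A) : A :=
  LinearMap.mul' K A ((TensorProduct.map (act.flip a) (act.flip b)) Finv)

/-- For `G = Σ G₁ ⊗ G₂ ∈ H ⊗ H`, the element `Σ (G₂ ▷ a) ⊗ G₁` of `A ⊗ H`
(e.g. the target map `t(a) = (R₂ ▷ a) ⋊ R₁` of the smash product bialgebroid). -/
noncomputable def tmap {K H A : Type} [CommRing K] [Ring H] [Bialgebra K H]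
    [Ring A] [Algebra K A]
    (act : H →ₗ[K] A →ₗ[K] A) (a : A) (G : H ⊗[K] H) : A ⊗[K] H :=
  (TensorProduct.comm K H A) ((TensorProduct.map LinearMap.id (act.flip a)) G)

/-- The bialgebroid counit `ε̃(a ⋊ L) = ε(L) a` of the smash product `A ⋊ H`. -/
noncomputable def epsSm (K H A : Type) [CommRing K] [Ring H] [Bialgebra K H]
    [Ring A] [Algebra K A] : A ⊗[K] H →ₗ[K] A :=
  (TensorProduct.rid K A).toLinearMap ∘ₗ TensorProduct.map LinearMap.id Coalgebra.counit

theorem TensorProduct.exists_fin_sum_tmul {K M N : Type} [CommSemiring K] [AddCommMonoid M]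
    [Module K M] [AddCommMonoid N] [Module K N] (x : M ⊗[K] N) :
    ∃ (n : ℕ) (f : Fin n → M) (g : Fin n → N), x = ∑ i, f i ⊗ₜ[K] g i := by
  obtain ⟨S, hS⟩ := TensorProduct.exists_finset x
  refine ⟨S.card, fun i => (S.equivFin.symm i).1.1, fun i => (S.equivFin.symm i).1.2, ?_⟩
  rw [hS, ← Finset.sum_attach S (fun p => p.1 ⊗ₜ[K] p.2)]
  exact Fintype.sum_equiv S.equivFin _ _ (fun p => by simp)

theorem TensorProduct.comm_mul {K B C : Type} [CommSemiring K] [Semiring B] [Algebra K B]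
    [Semiring C] [Algebra K C] (x y : B ⊗[K] C) :
    TensorProduct.comm K B C (x * y) =
      TensorProduct.comm K B C x * TensorProduct.comm K B C y :=
  map_mul (Algebra.TensorProduct.comm K B C) x y

section tmap

variable {K H A : Type} [CommRing K] [Ring H] [Bialgebra K H] [Ring A] [Algebra K A]
  (act : H →ₗ[K] A →ₗ[K] A)

@[simp]
theorem tmap_tmul (a : A) (x y : H) : tmap act a (x ⊗ₜ[K] y) = act y a ⊗ₜ[K] x := rfl

theorem tmap_add (a : A) (G₁ G₂ : H ⊗[K] H) :
    tmap act a (G₁ + G₂) = tmap act a G₁ + tmap act a G₂ := by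
  simp only [tmap, map_add]

theorem tmap_comm_mul_tmul (a : A) (Finv : H ⊗[K] H) (n : ℕ) (g1 g2 : Fin n → H)
    (hg : Finv = ∑ i, g1 i ⊗ₜ[K] g2 i) (x y : H) :
    tmap act a (TensorProduct.comm K H H Finv * x ⊗ₜ[K] y) =
      ∑ i, act (g1 i * y) a ⊗ₜ[K] (g2 i * x) := by
  simp only [tmap, hg, map_sum, TensorProduct.comm_tmul, Finset.sum_mul,
    Algebra.TensorProduct.tmul_mul_tmul, TensorProduct.map_tmul, LinearMap.id_coe, id_eq,
    LinearMap.flip_apply]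

theorem apply_tmap_eq_tmap_comm_mul
    (hact_mul : ∀ (L J : H) (a : A), act (L * J) a = act L (act J a))
    (Finv : H ⊗[K] H) (φ : A ⊗[K] H →ₗ[K] A ⊗[K] H)
    (hφ : ∀ (a : A) (L : H) (n : ℕ) (g1 g2 : Fin n → H),
      Finv = ∑ i, g1 i ⊗ₜ[K] g2 i →
      φ (a ⊗ₜ[K] L) = ∑ i, act (g1 i) a ⊗ₜ[K] (g2 i * L))
    (a : A) (G : H ⊗[K] H) :
    φ (tmap act a G) = tmap act a (TensorProduct.comm K H H Finv * G) := by
  obtain ⟨n, g1, g2, hg⟩ := TensorProduct.exists_fin_sum_tmul Finv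
  induction G using TensorProduct.induction_on with
  | zero => simp [tmap]
  | tmul x y =>
    simp only [tmap_tmul, hφ _ x n g1 g2 hg, tmap_comm_mul_tmul act a Finv n g1 g2 hg, hact_mul]
  | add G₁ G₂ h₁ h₂ => rw [tmap_add, map_add, h₁, h₂, mul_add, tmap_add]

end tmap

theorem targets_correspond_general
    {K H A : Type} [CommRing K] [Ring H] [Bialgebra K H] [Ring A] [Algebra K A]
    (act : H →ₗ[K] A →ₗ[K] A)
    (hact_mul : ∀ (L J : H) (a : A), act (L * J) a = act L (act J a))
    -- quasi-triangularity of (H, R)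
    (R : H ⊗[K] H)
    -- F is a normalized cocycle twist
    (F Finv : H ⊗[K] H)
    (hinv₂ : Finv * F = 1)
    -- the isomorphism φ
    (φ : A ⊗[K] H →ₗ[K] A ⊗[K] H)
    (hφ : ∀ (a : A) (L : H) (n : ℕ) (g1 g2 : Fin n → H),
      Finv = ∑ i, g1 i ⊗ₜ[K] g2 i →
      φ (a ⊗ₜ[K] L) = ∑ i, act (g1 i) a ⊗ₜ[K] (g2 i * L)) :
    -- φ(t^F(a)) = t_F̃(a), with R^F = F₂₁ R F⁻¹
    ∀ a : A,
      φ (tmap act a (TensorProduct.comm K H H F * R * Finv)) =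
        tmap act a (R * Finv) := by
  intro a
  have hcancel : TensorProduct.comm K H H Finv * TensorProduct.comm K H H F = 1 := by
    rw [← TensorProduct.comm_mul, hinv₂]
    exact map_one (Algebra.TensorProduct.comm K H H)
  rw [apply_tmap_eq_tmap_comm_mul act hact_mul Finv φ hφ, mul_assoc, ← mul_assoc, hcancel,
    one_mul]

/-- under `φ(a ⋊ L) = (F̄₁ ▷ a) ⋊ F̄₂L`, the target map
`t^F(a) = (R^F₂ ▷ a) ⋊ R^F₁` of the bialgebroid `A_F ⋊ H^F` corresponds to the
twisted target `t_F̃(a) = (R₂F̄₂' ▷ a) ⋊ R₁F̄₁'` of the Xu-twisted bialgebroid: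
`φ(t^F(a)) = t_F̃(a)`. -/
theorem targets_correspond
    {K H A : Type} [CommRing K] [Ring H] [Bialgebra K H] [Ring A] [Algebra K A]
    (act : H →ₗ[K] A →ₗ[K] A)
    (hact_one : ∀ a : A, act 1 a = a)
    (hact_mul : ∀ (L J : H) (a : A), act (L * J) a = act L (act J a))
    (hact_unit : ∀ L : H, act L (1 : A) = Coalgebra.counit (R := K) L • (1 : A))
    (hact_alg : ∀ (L : H) (a b : A) (n : ℕ) (L1 L2 : Fin n → H),
      Coalgebra.comul (R := K) L = ∑ i, L1 i ⊗ₜ[K] L2 i →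
      act L (a * b) = ∑ i, act (L1 i) a * act (L2 i) b)
    -- quasi-triangularity of (H, R)
    (R Rinv : H ⊗[K] H)
    (hR₁ : R * Rinv = 1) (hR₂ : Rinv * R = 1)
    (hRΔ : ∀ x : H,
      R * Coalgebra.comul (R := K) x * Rinv =
        TensorProduct.comm K H H (Coalgebra.comul (R := K) x))
    (hhex₁ : copL K H R = leg13 K H R * leg23 K H R)
    (hhex₂ : copR K H R = leg13 K H R * leg12 K H R)
    (hRn₁ : ctL K H R = 1) (hRn₂ : ctR K H R = 1)
    -- A is braided commutative w.r.t. R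
    (hbr : ∀ (a b : A) (n : ℕ) (r1 r2 : Fin n → H),
      R = ∑ i, r1 i ⊗ₜ[K] r2 i → a * b = ∑ i, act (r2 i) b * act (r1 i) a)
    -- F is a normalized cocycle twist
    (F Finv : H ⊗[K] H)
    (hinv₁ : F * Finv = 1) (hinv₂ : Finv * F = 1)
    (hcoc : leg12 K H F * copL K H F = leg23 K H F * copR K H F)
    (hnorm₁ : ctL K H F = 1) (hnorm₂ : ctR K H F = 1)
    -- the isomorphism φ
    (φ : A ⊗[K] H →ₗ[K] A ⊗[K] H)
    (hφ : ∀ (a : A) (L : H) (n : ℕ) (g1 g2 : Fin n → H),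
      Finv = ∑ i, g1 i ⊗ₜ[K] g2 i →
      φ (a ⊗ₜ[K] L) = ∑ i, act (g1 i) a ⊗ₜ[K] (g2 i * L)) :
    -- φ(t^F(a)) = t_F̃(a), with R^F = F₂₁ R F⁻¹
    ∀ a : A,
      φ (tmap act a (TensorProduct.comm K H H F * R * Finv)) =
        tmap act a (R * Finv) :=
  targets_correspond_general act hact_mul R F Finv hinv₂ φ hφ
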